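/- Let N ≥ 3, α > 2 − N, β ≥ α − 2, and let p satisfy p ≥ 2N/(N−2) and p ≥ 2(N+β)/(N−2+α). Then for every x ∈ ℝ^N with 0 < |x| < 1, writing ρ = 2/(1 − |x|²) and d = log((1 + |x|)/(1 − |x|)), one has −1 + (1/2)(N + (N−2)ρ|x|² + α ρ|x|/d) − (1/p)(N + N ρ|x|² + β ρ|x|/d) ≥ 0. -/

import Mathlib

/-!
Multiplying the coefficient by `2 p d` turns it into `A d (1 + ρ r²) + B ρ r`, where `r = |x|`,
`A = p (N - 2) - 2N ≥ 0` and `A + B = p (N - 2 + α) - 2 (N + β) ≥ 0` are the two conditions on `p`.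
Since `d = log ((1 + r) / (1 - r)) ≥ 2r` (the first term of its odd power series), one has
`ρ r = 2r / (1 - r²) ≤ d (1 + r²) / (1 - r²) = d (1 + ρ r²)`, so the expression is at least
`(A + B) ρ r ≥ 0`.
-/

open Real

lemma two_mul_le_log_one_add_div_one_sub {t : ℝ} (h0 : 0 ≤ t) (h1 : t < 1) :
    2 * t ≤ log ((1 + t) / (1 - t)) := by
  rw [log_div (by linarith) (by linarith)]
  have hseries := hasSum_log_sub_log_of_abs_lt_one (abs_lt.mpr ⟨by linarith, h1⟩)
  simpa using le_hasSum hseries 0 fun k _ => by positivity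

lemma conformal_factor_mul_le_log_mul {t : ℝ} (h0 : 0 ≤ t) (h1 : t < 1) :
    2 / (1 - t ^ 2) * t ≤ log ((1 + t) / (1 - t)) * (1 + 2 / (1 - t ^ 2) * t ^ 2) := by
  have hs : 0 < 1 - t ^ 2 := by nlinarith
  have hd := two_mul_le_log_one_add_div_one_sub h0 h1
  have hfactor : (1 + 2 / (1 - t ^ 2) * t ^ 2) * (1 - t ^ 2) = 1 + t ^ 2 := by
    field_simp
    ring
  rw [div_mul_eq_mul_div, div_le_iff₀ hs, mul_assoc, hfactor]
  nlinarith [sq_nonneg t]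

lemma nonneg_of_le_mul_of_add_nonneg {A B d s r : ℝ} (hA : 0 ≤ A) (hAB : 0 ≤ A + B) (hr : 0 ≤ r)
    (hrds : r ≤ d * s) : 0 ≤ A * (d * s) + B * r := by
  nlinarith [mul_le_mul_of_nonneg_left hrds hA, mul_nonneg hAB hr]

theorem pohozaev_coefficient_nonneg_general (N : ℕ) (hN : 3 ≤ N) (α β p : ℝ)
    (hα : 2 - (N : ℝ) < α)
    (hp1 : 2 * (N : ℝ) / ((N : ℝ) - 2) ≤ p)
    (hp2 : 2 * ((N : ℝ) + β) / ((N : ℝ) - 2 + α) ≤ p)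
    (x : EuclideanSpace ℝ (Fin N)) (hx0 : 0 < ‖x‖) (hx1 : ‖x‖ < 1) (ρ d : ℝ)
    (hρ : ρ = 2 / (1 - ‖x‖ ^ 2))
    (hd : d = Real.log ((1 + ‖x‖) / (1 - ‖x‖))) :
    0 ≤ -1 + (1 / 2) * ((N : ℝ) + ((N : ℝ) - 2) * ρ * ‖x‖ ^ 2 + α * ρ * ‖x‖ / d)
      - (1 / p) * ((N : ℝ) + (N : ℝ) * ρ * ‖x‖ ^ 2 + β * ρ * ‖x‖ / d) := by
  set r := ‖x‖
  have hN2 : (0 : ℝ) < N - 2 := by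
    have : (3 : ℝ) ≤ N := by exact_mod_cast hN
    linarith
  have hA : 0 ≤ p * (N - 2) - 2 * N := by
    rw [div_le_iff₀ hN2] at hp1; linarith
  have hAB : 0 ≤ p * (N - 2) - 2 * N + (p * α - 2 * β) := by
    rw [div_le_iff₀ (by linarith)] at hp2; linarith
  have hp : 0 < p := (div_pos (by positivity) hN2).trans_le hp1
  have hρ_pos : 0 < ρ := by rw [hρ]; exact div_pos two_pos (by nlinarith)
  have hd_pos : 0 < d := by
    rw [hd]; linarith [two_mul_le_log_one_add_div_one_sub hx0.le hx1]
  have hkey : ρ * r ≤ d * (1 + ρ * r ^ 2) := by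
    rw [hρ, hd]; exact conformal_factor_mul_le_log_mul hx0.le hx1
  have hcoeff : -1 + (1 / 2) * ((N : ℝ) + ((N : ℝ) - 2) * ρ * r ^ 2 + α * ρ * r / d)
      - (1 / p) * ((N : ℝ) + (N : ℝ) * ρ * r ^ 2 + β * ρ * r / d)
      = ((p * (N - 2) - 2 * N) * (d * (1 + ρ * r ^ 2)) + (p * α - 2 * β) * (ρ * r))
        / (2 * p * d) := by
    field_simp
    ring
  rw [hcoeff]
  exact div_nonneg (nonneg_of_le_mul_of_add_nonneg hA hAB (by positivity) hkey) (by positivity)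

/-- nonnegativity of the coefficient in the Pohozaev identity. -/
theorem pohozaev_coefficient_nonneg (N : ℕ) (hN : 3 ≤ N) (α β p : ℝ)
    (hα : 2 - (N : ℝ) < α) (hβ : α - 2 ≤ β)
    (hp1 : 2 * (N : ℝ) / ((N : ℝ) - 2) ≤ p)
    (hp2 : 2 * ((N : ℝ) + β) / ((N : ℝ) - 2 + α) ≤ p)
    (x : EuclideanSpace ℝ (Fin N)) (hx0 : 0 < ‖x‖) (hx1 : ‖x‖ < 1) (ρ d : ℝ)
    (hρ : ρ = 2 / (1 - ‖x‖ ^ 2))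
    (hd : d = Real.log ((1 + ‖x‖) / (1 - ‖x‖))) :
    0 ≤ -1 + (1 / 2) * ((N : ℝ) + ((N : ℝ) - 2) * ρ * ‖x‖ ^ 2 + α * ρ * ‖x‖ / d)
      - (1 / p) * ((N : ℝ) + (N : ℝ) * ρ * ‖x‖ ^ 2 + β * ρ * ‖x‖ / d) :=
  pohozaev_coefficient_nonneg_general N hN α β p hα hp1 hp2 x hx0 hx1 ρ d hρ hd
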